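/- arXiv:1212.1407 — 2 statements merged into one kernel-verified Lean document; each statement's English description precedes it below -/
import Mathlib

section
/- Given a family E of subsets of a finite nonempty set Z with ∅, Z ∈ E, E closed under pairwise intersection, and the augmentation property (every X ∈ E with X ≠ Z has z ∈ Z \ X with X ∪ {z} ∈ E), the operator cl(A) = intersection of all members of E containing A is a closure operator with the anti-exchange property. -/
/-!
Intersection-closedness and finiteness make `cl A` itself a member of `E`, which gives the
closure axioms. For anti-exchange, enlarge `cl A` to a maximal member `F` of `E` avoiding both
`x` and `y`. Augmentation adds to `F` a single point, which by maximality must be `x` or `y`;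
then `F ∪ {x}` is a closed set containing `A ∪ {x}` but not `y`, or `F ∪ {y}` one containing
`A ∪ {y}` but not `x`.
-/

namespace Set

variable {α : Type*} {E : Set (Set α)} {A B F X : Set α}

def familyClosure (E : Set (Set α)) (A : Set α) : Set α :=
  ⋂₀ {X | X ∈ E ∧ A ⊆ X}

theorem subset_familyClosure : A ⊆ familyClosure E A :=
  subset_sInter fun _ hX => hX.2

theorem familyClosure_subset (hX : X ∈ E) (hAX : A ⊆ X) : familyClosure E A ⊆ X :=
  sInter_subset_of_mem ⟨hX, hAX⟩

theorem familyClosure_mono (hAB : A ⊆ B) : familyClosure E A ⊆ familyClosure E B :=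
  subset_sInter fun _ hX => familyClosure_subset hX.1 (hAB.trans hX.2)

theorem familyClosure_mem [Finite α] (huniv : univ ∈ E) (hE : InfClosed E) (A : Set α) :
    familyClosure E A ∈ E :=
  hE.sInf_mem (toFinite _) huniv fun _ hX => hX.1

theorem familyClosure_familyClosure [Finite α] (huniv : univ ∈ E) (hE : InfClosed E)
    (A : Set α) : familyClosure E (familyClosure E A) = familyClosure E A :=
  (familyClosure_subset (familyClosure_mem huniv hE A) subset_rfl).antisymm subset_familyClosure

theorem mem_union_singleton_of_mem_familyClosure {z w : α} (hAF : A ⊆ F) (hFz : F ∪ {z} ∈ E)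
    (hw : w ∈ familyClosure E (A ∪ {z})) : w ∈ F ∪ {z} :=
  familyClosure_subset hFz (union_subset_union_left _ hAF) hw

theorem exists_superset_avoiding_augmentable [Finite α]
    (haug : ∀ X ∈ E, X ≠ univ → ∃ z ∉ X, X ∪ {z} ∈ E) {C : Set α} (hC : C ∈ E) {x y : α}
    (hxC : x ∉ C) (hyC : y ∉ C) :
    ∃ F ∈ E, C ⊆ F ∧ x ∉ F ∧ y ∉ F ∧ (F ∪ {x} ∈ E ∨ F ∪ {y} ∈ E) := by
  let S : Set (Set α) := {X | X ∈ E ∧ C ⊆ X ∧ x ∉ X ∧ y ∉ X}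
  obtain ⟨F, ⟨hFE, hCF, hxF, hyF⟩, hFmax⟩ :=
    S.toFinite.exists_maximal ⟨C, hC, subset_rfl, hxC, hyC⟩
  obtain ⟨z, hzF, hFz⟩ := haug F hFE (ne_univ_iff_exists_notMem F |>.mpr ⟨x, hxF⟩)
  refine ⟨F, hFE, hCF, hxF, hyF, ?_⟩
  by_contra! hxy
  have hzx : z ≠ x := by rintro rfl; exact hxy.1 hFz
  have hzy : z ≠ y := by rintro rfl; exact hxy.2 hFz
  have hFzS : F ∪ {z} ∈ S :=
    ⟨hFz, hCF.trans subset_union_left, by simp [hxF, hzx.symm], by simp [hyF, hzy.symm]⟩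
  exact hzF (hFmax hFzS subset_union_left (mem_union_right F rfl))

theorem familyClosure_antiExchange [Finite α] (huniv : univ ∈ E) (hE : InfClosed E)
    (haug : ∀ X ∈ E, X ≠ univ → ∃ z ∉ X, X ∪ {z} ∈ E) {x y : α} (hxy : x ≠ y)
    (hyx : y ∈ familyClosure E (A ∪ {x})) (hyA : y ∉ familyClosure E A) :
    x ∉ familyClosure E (A ∪ {y}) := by
  intro hxy'
  have hxA : x ∉ familyClosure E A := fun hx =>
    hyA <| familyClosure_subset (familyClosure_mem huniv hE A)
      (union_subset subset_familyClosure (singleton_subset_iff.mpr hx)) hyx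
  obtain ⟨F, -, hCF, hxF, hyF, hFx | hFy⟩ :=
    exists_superset_avoiding_augmentable haug (familyClosure_mem huniv hE A) hxA hyA
  · rcases mem_union_singleton_of_mem_familyClosure (subset_familyClosure.trans hCF) hFx hyx
      with hy | rfl
    exacts [hyF hy, hxy rfl]
  · rcases mem_union_singleton_of_mem_familyClosure (subset_familyClosure.trans hCF) hFy hxy'
      with hx | rfl
    exacts [hxF hx, hxy rfl]

end Set

theorem closure_of_family_antiExchange_general {Z : Type*} [Fintype Z]
    (E : Set (Set Z))
    (huniv : (Set.univ : Set Z) ∈ E)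
    (hinter : ∀ X ∈ E, ∀ Y ∈ E, X ∩ Y ∈ E)
    (haug : ∀ X ∈ E, X ≠ Set.univ → ∃ z ∉ X, X ∪ {z} ∈ E) :
    let cl : Set Z → Set Z := fun A => ⋂₀ {X | X ∈ E ∧ A ⊆ X}
    (∀ A : Set Z, A ⊆ cl A) ∧
    (∀ A B : Set Z, A ⊆ B → cl A ⊆ cl B) ∧
    (∀ A : Set Z, cl (cl A) = cl A) ∧
    (∀ (A : Set Z) (x y : Z), x ≠ y → y ∈ cl (A ∪ {x}) → y ∉ cl A →
      x ∉ cl (A ∪ {y})) := by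
  have hE : InfClosed E := fun X hX Y hY => hinter X hX Y hY
  exact ⟨fun _ => Set.subset_familyClosure, fun _ _ => Set.familyClosure_mono,
    Set.familyClosure_familyClosure huniv hE,
    fun _ _ _ hxy => Set.familyClosure_antiExchange huniv hE haug hxy⟩

/-- Given a family `E` of subsets of a finite nonempty set with `∅, Z ∈ E`, closed under
pairwise intersection and satisfying augmentation, the operator
`cl A = ⋂ { X ∈ E | A ⊆ X }` is a closure operator with the anti-exchange property. -/
theorem closure_of_family_antiExchange {Z : Type*} [Fintype Z] [Nonempty Z]
    (E : Set (Set Z))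
    (hempty : (∅ : Set Z) ∈ E) (huniv : (Set.univ : Set Z) ∈ E)
    (hinter : ∀ X ∈ E, ∀ Y ∈ E, X ∩ Y ∈ E)
    (haug : ∀ X ∈ E, X ≠ Set.univ → ∃ z ∉ X, X ∪ {z} ∈ E) :
    let cl : Set Z → Set Z := fun A => ⋂₀ {X | X ∈ E ∧ A ⊆ X}
    (∀ A : Set Z, A ⊆ cl A) ∧
    (∀ A B : Set Z, A ⊆ B → cl A ⊆ cl B) ∧
    (∀ A : Set Z, cl (cl A) = cl A) ∧
    (∀ (A : Set Z) (x y : Z), x ≠ y → y ∈ cl (A ∪ {x}) → y ∉ cl A →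
      x ∉ cl (A ∪ {y})) :=
  closure_of_family_antiExchange_general E huniv hinter haug
end

section
/- For a finite set P of points in ℝⁿ, the family E = { X ⊆ P : conv(X) ∩ P = X } is a convex geometry on P (the convex shelling). -/
/-!
Closure under intersection holds for any hull operator; the content is augmentation. Given a
closed `X ⊊ P`, pick `z ∈ P \ X` for which `conv (X ∪ {z}) ∩ P` is inclusion-minimal. If some
`y ∈ P \ X` lay in `conv (X ∪ {z})`, then `conv (X ∪ {y}) ⊆ conv (X ∪ {z})`, so minimality puts
`z` in `conv (X ∪ {y})`, and the anti-exchange property of convex hulls forces `y = z`.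
-/

def IsConvexGeometryOn {α : Type*} (Z : Set α) (E : Set (Set α)) : Prop :=
  (∀ X ∈ E, X ⊆ Z) ∧
  (∅ : Set α) ∈ E ∧ Z ∈ E ∧
  (∀ X ∈ E, ∀ Y ∈ E, X ∩ Y ∈ E) ∧
  (∀ X ∈ E, X ≠ Z → ∃ z ∈ Z \ X, X ∪ {z} ∈ E)

open Set

lemma convexHull_inter_inter_eq {𝕜 E : Type*} [Semiring 𝕜] [PartialOrder 𝕜] [AddCommMonoid E]
    [Module 𝕜 E] {P X Y : Set E} (hX : convexHull 𝕜 X ∩ P = X)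
    (hY : convexHull 𝕜 Y ∩ P = Y) : convexHull 𝕜 (X ∩ Y) ∩ P = X ∩ Y := by
  refine (subset_inter ?_ ?_).antisymm (subset_inter (subset_convexHull 𝕜 _) ?_)
  · exact (inter_subset_inter_left P (convexHull_mono inter_subset_left)).trans hX.subset
  · exact (inter_subset_inter_left P (convexHull_mono inter_subset_right)).trans hY.subset
  · exact inter_subset_left.trans (hX.symm.subset.trans inter_subset_right)

section LinearOrderedField

variable {𝕜 E : Type*} [Field 𝕜] [LinearOrder 𝕜] [IsStrictOrderedRing 𝕜]
  [AddCommGroup E] [Module 𝕜 E]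

lemma mem_segment_of_mem_segment_of_mem_segment {x x' y z : E} (hy : y ∈ segment 𝕜 z x)
    (hz : z ∈ segment 𝕜 y x') (hyz : y ≠ z) : z ∈ segment 𝕜 x x' := by
  obtain ⟨a, b, ha, hb, hab, rfl⟩ := hy
  obtain ⟨c, d, hc, hd, hcd, hz⟩ := hz
  have hca : c * a < 1 := by
    refine lt_of_le_of_ne (by nlinarith) fun hca ↦ hyz ?_
    obtain rfl : a = 1 := by nlinarith
    obtain rfl : b = 0 := by linarith
    simp
  have he : 0 < 1 - c * a := sub_pos.2 hca
  -- Substituting `y` gives `z = (c * a) • z + (c * b) • x + d • x'`; solve for `z`.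
  refine ⟨c * b / (1 - c * a), d / (1 - c * a), by positivity, by positivity, ?_, ?_⟩
  · rw [← add_div, div_eq_one_iff_eq he.ne']
    linear_combination c * hab + hcd
  · have hsolve : (c * b) • x + d • x' = (1 - c * a) • z := by
      linear_combination (norm := module) hz
    rw [div_eq_inv_mul, div_eq_inv_mul, mul_smul _ (c * b), mul_smul _ d, ← smul_add, hsolve,
      inv_smul_smul₀ he.ne']

lemma eq_of_mem_convexHull_insert_of_mem_convexHull_insert {X : Set E} {y z : E}
    (hz : z ∉ convexHull 𝕜 X) (hy : y ∈ convexHull 𝕜 (insert z X))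
    (hzy : z ∈ convexHull 𝕜 (insert y X)) : y = z := by
  rcases X.eq_empty_or_nonempty with rfl | hX
  · simpa using hy
  by_contra hyz
  simp only [convexHull_insert hX, convexJoin_singleton_left, mem_iUnion₂] at hy hzy
  obtain ⟨x, hx, hy⟩ := hy
  obtain ⟨x', hx', hz'⟩ := hzy
  exact hz <| (convex_convexHull 𝕜 X).segment_subset hx hx'
    (mem_segment_of_mem_segment_of_mem_segment hy hz' hyz)

lemma exists_convexHull_insert_inter_eq {P X : Set E} (hP : P.Finite)
    (hX : convexHull 𝕜 X ∩ P = X) (hPX : (P \ X).Nonempty) :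
    ∃ z ∈ P \ X, convexHull 𝕜 (insert z X) ∩ P = insert z X := by
  obtain ⟨z, hzPX, hzmin⟩ :=
    hP.sdiff.exists_minimalFor (fun w ↦ convexHull 𝕜 (insert w X) ∩ P) _ hPX
  have hXP : X ⊆ P := hX.symm.subset.trans inter_subset_right
  have hzX : z ∉ convexHull 𝕜 X := fun h ↦ hzPX.2 (hX ▸ ⟨h, hzPX.1⟩)
  refine ⟨z, hzPX, Subset.antisymm ?_
    (subset_inter (subset_convexHull 𝕜 _) (insert_subset hzPX.1 hXP))⟩
  rintro y ⟨hy, hyP⟩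
  by_cases hyX : y ∈ X
  · exact mem_insert_of_mem z hyX
  have hyz : convexHull 𝕜 (insert y X) ⊆ convexHull 𝕜 (insert z X) :=
    convexHull_min (insert_subset hy ((subset_insert z X).trans (subset_convexHull 𝕜 _)))
      (convex_convexHull 𝕜 _)
  have hzy : z ∈ convexHull 𝕜 (insert y X) :=
    (hzmin ⟨hyP, hyX⟩ (inter_subset_inter_left P hyz)
      ⟨subset_convexHull 𝕜 _ (mem_insert z X), hzPX.1⟩).1
  exact eq_of_mem_convexHull_insert_of_mem_convexHull_insert hzX hy hzy ▸ mem_insert y X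

end LinearOrderedField

/-- The convex shelling of a finite point set `P ⊆ ℝⁿ` is a convex geometry on `P`. -/
theorem convexShelling_isConvexGeometry (n : ℕ) (P : Set (EuclideanSpace ℝ (Fin n)))
    (hP : P.Finite) :
    IsConvexGeometryOn P {X | X ⊆ P ∧ convexHull ℝ X ∩ P = X} := by
  refine ⟨fun X hX ↦ hX.1, ⟨empty_subset P, by simp⟩,
    ⟨subset_rfl, inter_eq_right.2 (subset_convexHull ℝ P)⟩, ?_, ?_⟩
  · rintro X ⟨hXP, hX⟩ Y ⟨-, hY⟩
    exact ⟨inter_subset_left.trans hXP, convexHull_inter_inter_eq hX hY⟩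
  · rintro X ⟨hXP, hX⟩ hXne
    obtain ⟨z, hz, hzX⟩ :=
      exists_convexHull_insert_inter_eq hP hX (sdiff_nonempty.2 fun h ↦ hXne (hXP.antisymm h))
    refine ⟨z, hz, ?_⟩
    rw [union_singleton]
    exact ⟨insert_subset hz.1 hXP, hzX⟩
end
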